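/- For every α ∈ (0,1), the map prox_α : ℝ^k → Δ_k that sends x to the unique minimizer of P_α(x, ·) over Δ_k is nonexpansive: ‖prox_α(x) − prox_α(y)‖₂ ≤ ‖x − y‖₂ for all x, y ∈ ℝ^k. -/

import Mathlib

/-- The probability simplex Δ_k in ℝ^k. -/
def simplex (k : ℕ) : Set (Fin k → ℝ) :=
  {z | (∀ i, 0 ≤ z i) ∧ ∑ i, z i = 1}

/-- The prox objective `P_α(x, z) = (1/2)‖x − z‖₂² + α Σ_i z_i log z_i − (α/2)‖z‖₂²`.
(Note `Real.log 0 = 0`, giving the convention `0 · log 0 = 0`.) -/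
noncomputable def proxObj {k : ℕ} (α : ℝ) (x z : Fin k → ℝ) : ℝ :=
  (1 / 2) * ∑ i, (x i - z i) ^ 2 + α * ∑ i, z i * Real.log (z i)
    - (α / 2) * ∑ i, (z i) ^ 2

/-- `s log s − s²/2` is convex on `[0,1]`. -/
lemma gconv17 : ConvexOn ℝ (Set.Icc (0:ℝ) 1) (fun s => s * Real.log s - s^2/2) := by
  have hderiv : ∀ x ∈ Set.Ioo (0:ℝ) 1,
      HasDerivAt (fun s => s * Real.log s - s^2/2) (Real.log x + 1 - x) x := by
    intro x hx
    have h1 := Real.hasDerivAt_mul_log hx.1.ne'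
    have h2 : HasDerivAt (fun s : ℝ => s^2/2) x x := by
      have := (hasDerivAt_pow 2 x).div_const 2
      simpa using this
    exact h1.sub h2
  refine MonotoneOn.convexOn_of_deriv (convex_Icc 0 1) ?_ ?_ ?_
  · exact (Real.continuous_mul_log.sub (by continuity)).continuousOn
  · rw [interior_Icc]
    exact fun x hx => (hderiv x hx).differentiableAt.differentiableWithinAt
  · rw [interior_Icc]
    intro a ha b hb hab
    rw [(hderiv a ha).deriv, (hderiv b hb).deriv]
    have hlog : Real.log a ≤ Real.log b := Real.log_le_log ha.1 hab
    have h := Real.log_le_sub_one_of_pos (div_pos ha.1 hb.1)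
    rw [Real.log_div ha.1.ne' hb.1.ne'] at h
    have hb0 : (0:ℝ) < b := hb.1
    have hmul : b * (Real.log a - Real.log b) ≤ a - b := by
      have := mul_le_mul_of_nonneg_left h hb0.le
      have hid : b * (a / b - 1) = a - b := by field_simp
      nlinarith
    nlinarith [mul_nonneg (sub_nonneg.2 hlog) (sub_nonneg.2 hb.2.le)]

/-- Per-coordinate strong convexity inequality. -/
lemma coord17 (α : ℝ) (hα : 0 ≤ α) {a b t : ℝ} (ha : a ∈ Set.Icc (0:ℝ) 1)
    (hb : b ∈ Set.Icc (0:ℝ) 1) (ht : t ∈ Set.Icc (0:ℝ) 1) (c : ℝ) :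
    (1/2)*(c - ((1-t)*a + t*b))^2 + α*(((1-t)*a + t*b) * Real.log ((1-t)*a + t*b))
      - (α/2)*((1-t)*a + t*b)^2
    ≤ (1-t)*((1/2)*(c - a)^2 + α*(a * Real.log a) - (α/2)*a^2)
      + t*((1/2)*(c - b)^2 + α*(b * Real.log b) - (α/2)*b^2)
      - (1/2)*t*(1-t)*(a - b)^2 := by
  have hg := gconv17.2 ha hb (by linarith [ht.2] : (0:ℝ) ≤ 1 - t) ht.1 (by ring)
  simp only [smul_eq_mul] at hg
  nlinarith [mul_le_mul_of_nonneg_left hg hα]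

theorem stmt17 {k : ℕ} (α : ℝ) (hα : α ∈ Set.Ioo (0 : ℝ) 1)
    (P : (Fin k → ℝ) → (Fin k → ℝ))
    (hP : ∀ x, P x ∈ simplex k ∧ ∀ w ∈ simplex k, proxObj α x (P x) ≤ proxObj α x w) :
    ∀ x y : Fin k → ℝ,
      Real.sqrt (∑ i, (P x i - P y i) ^ 2) ≤ Real.sqrt (∑ i, (x i - y i) ^ 2) := by
  obtain ⟨hα0, hα1⟩ := hα
  -- expand proxObj as a single sum
  have expand : ∀ x z : Fin k → ℝ, proxObj α x z =
      ∑ i, ((1/2)*(x i - z i)^2 + α*(z i * Real.log (z i)) - (α/2)*(z i)^2) := by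
    intro x z
    simp [proxObj, Finset.mul_sum, Finset.sum_sub_distrib, Finset.sum_add_distrib]
  -- coordinates of simplex points lie in [0,1]
  have memIcc : ∀ z ∈ simplex k, ∀ i, z i ∈ Set.Icc (0:ℝ) 1 := by
    intro z hz i
    refine ⟨hz.1 i, ?_⟩
    have := Finset.single_le_sum (f := z) (fun j _ => hz.1 j) (Finset.mem_univ i)
    rw [hz.2] at this; exact this
  -- strong convexity of the objective on the simplex
  have lemA : ∀ (x u v : Fin k → ℝ), u ∈ simplex k → v ∈ simplex k →
      ∀ t ∈ Set.Icc (0:ℝ) 1,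
      proxObj α x (fun i => (1-t)*u i + t*v i)
        ≤ (1-t)*proxObj α x u + t*proxObj α x v
          - (1/2)*t*(1-t)*∑ i, (u i - v i)^2 := by
    intro x u v hu hv t ht
    rw [expand, expand, expand, Finset.mul_sum, Finset.mul_sum, Finset.mul_sum,
      ← Finset.sum_add_distrib, ← Finset.sum_sub_distrib]
    exact Finset.sum_le_sum fun i _ =>
      coord17 α hα0.le (memIcc u hu i) (memIcc v hv i) ht (x i)
  -- segment stays in simplex
  have memSeg : ∀ (u v : Fin k → ℝ), u ∈ simplex k → v ∈ simplex k →
      ∀ t ∈ Set.Icc (0:ℝ) 1, (fun i => (1-t)*u i + t*v i) ∈ simplex k := by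
    intro u v hu hv t ht
    constructor
    · intro i
      have hui := hu.1 i; have hvi := hv.1 i
      have h1 : (0:ℝ) ≤ 1 - t := by linarith [ht.2]
      have := mul_nonneg h1 hui
      have := mul_nonneg ht.1 hvi
      show (0:ℝ) ≤ (1 - t) * u i + t * v i
      linarith
    · rw [Finset.sum_add_distrib, ← Finset.mul_sum, ← Finset.mul_sum, hu.2, hv.2]; ring
  -- minimizer inequality with strong convexity term
  have lemB : ∀ (x v : Fin k → ℝ), v ∈ simplex k →
      proxObj α x (P x) + (1/2) * ∑ i, (P x i - v i)^2 ≤ proxObj α x v := by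
    intro x v hv
    set u := P x with hu
    set D := ∑ i, (u i - v i)^2 with hD
    have hD0 : 0 ≤ D := Finset.sum_nonneg fun i _ => sq_nonneg _
    refine le_of_forall_pos_le_add ?_
    intro ε hε
    set t : ℝ := min (1/2) (ε/(D+1)) with htdef
    have ht0 : 0 < t := lt_min (by norm_num) (div_pos hε (by linarith))
    have ht1 : t ≤ 1/2 := min_le_left _ _
    have htmem : t ∈ Set.Icc (0:ℝ) 1 := ⟨ht0.le, by linarith⟩
    have hmin := (hP x).2 _ (memSeg u v (hP x).1 hv t htmem)
    have hA := lemA x u v (hP x).1 hv t htmem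
    have key : proxObj α x u ≤ proxObj α x v - (1/2)*(1-t)*D := by
      have h1 : t * proxObj α x u ≤ t * (proxObj α x v - (1/2)*(1-t)*D) := by
        nlinarith [hmin.trans hA]
      exact le_of_mul_le_mul_left h1 ht0
    have htD : (1/2)*t*D ≤ ε := by
      have h2 : t ≤ ε/(D+1) := min_le_right _ _
      have h3 : t * D ≤ (ε/(D+1)) * D := mul_le_mul_of_nonneg_right h2 hD0
      have h4 : (ε/(D+1)) * D ≤ ε := by
        rw [div_mul_eq_mul_div, div_le_iff₀ (by linarith)]
        nlinarith
      linarith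
    linarith
  intro x y
  set u := P x with hu
  set v := P y with hv
  set D := ∑ i, (u i - v i)^2 with hD
  have hD0 : 0 ≤ D := Finset.sum_nonneg fun i _ => sq_nonneg _
  have h1 := lemB x v (hP y).1
  have h2 := lemB y u (hP x).1
  have hsym : ∑ i, (v i - u i)^2 = D := Finset.sum_congr rfl fun i _ => by ring
  rw [hsym] at h2
  have hiden : proxObj α x v - proxObj α x u + (proxObj α y u - proxObj α y v)
      = ∑ i, (x i - y i) * (u i - v i) := by
    rw [expand x v, expand x u, expand y u, expand y v, ← Finset.sum_sub_distrib,
      ← Finset.sum_sub_distrib, ← Finset.sum_add_distrib]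
    exact Finset.sum_congr rfl fun i _ => by ring
  have hDle : D ≤ ∑ i, (x i - y i) * (u i - v i) := by
    rw [← hiden]; linarith
  have hcs := Finset.sum_mul_sq_le_sq_mul_sq Finset.univ (fun i => x i - y i)
    (fun i => u i - v i)
  have hcs2 : ∑ i, (x i - y i) * (u i - v i)
      ≤ Real.sqrt (∑ i, (x i - y i)^2) * Real.sqrt D := by
    calc ∑ i, (x i - y i) * (u i - v i) ≤ |∑ i, (x i - y i) * (u i - v i)| := le_abs_self _
      _ = Real.sqrt ((∑ i, (x i - y i) * (u i - v i))^2) := (Real.sqrt_sq_eq_abs _).symm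
      _ ≤ Real.sqrt ((∑ i, (x i - y i)^2) * ∑ i, (u i - v i)^2) := Real.sqrt_le_sqrt hcs
      _ = _ := Real.sqrt_mul (Finset.sum_nonneg fun i _ => sq_nonneg _) _
  have hfinal : D ≤ Real.sqrt (∑ i, (x i - y i)^2) * Real.sqrt D := hDle.trans hcs2
  rcases eq_or_lt_of_le (Real.sqrt_nonneg D) with h0 | h0
  · rw [← h0]; exact Real.sqrt_nonneg _
  · have : Real.sqrt D * Real.sqrt D ≤ Real.sqrt (∑ i, (x i - y i)^2) * Real.sqrt D := by
      rw [Real.mul_self_sqrt hD0]; exact hfinal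
    exact le_of_mul_le_mul_right this h0
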